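/- (Theorem 5.1, Case 1: reverse KL modifies probability mass more aggressively than forward KL.) In the setting of one gradient step on the logits of a softmax distribution, suppose x1, x2 ∈ Y satisfy p(x1) = p(x2), q(x1) > q(x2), and p(x1) ≥ q(x1). Then Δ^r(x1, x2) > Δ^f(x1, x2): the reverse-KL step increases the log-probability ratio of x1 over x2 strictly more than the forward-KL step does. -/
import Mathlib


open scoped BigOperators

/-- Softmax distribution attached to a vector of logits on a finite type. -/
noncomputable def softmax {Y : Type*} [Fintype Y] (f : Y → ℝ) (y : Y) : ℝ :=
  Real.exp (f y) / ∑ k, Real.exp (f k)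

/-- KL divergence between two distributions on a finite type,
with the convention `0 * log 0 = 0` (automatic since `0 * x = 0`). -/
noncomputable def KL {Y : Type*} [Fintype Y] (p q : Y → ℝ) : ℝ :=
  ∑ y, p y * Real.log (p y / q y)

lemma softmax_pos {Y : Type*} [Fintype Y] [Nonempty Y] (f : Y → ℝ) (y : Y) :
    0 < softmax f y := by
  unfold softmax
  positivity

lemma log_softmax {Y : Type*} [Fintype Y] [Nonempty Y] (f : Y → ℝ) (y : Y) :
    Real.log (softmax f y) = f y - Real.log (∑ k, Real.exp (f k)) := by
  have hs : (0:ℝ) < ∑ k, Real.exp (f k) := by positivity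
  rw [softmax, Real.log_div (Real.exp_ne_zero _) (ne_of_gt hs), Real.log_exp]

/-- Theorem 5.1, Case 1: if `p(x1) = p(x2)`,
`q(x1) > q(x2)` and `p(x1) ≥ q(x1)`, then the reverse-KL gradient step
increases the log-probability ratio of `x1` over `x2` strictly more than the
forward-KL gradient step does: `Δ^r(x1,x2) > Δ^f(x1,x2)`. -/
theorem reverse_KL_more_aggressive_case1
    {Y : Type*} [Fintype Y] (hcard : 2 ≤ Fintype.card Y)
    (q : Y → ℝ) (hq_pos : ∀ y, 0 < q y) (hq_sum : ∑ y, q y = 1)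
    (f : Y → ℝ) (η : ℝ) (hη : 0 < η)
    (p pf pr : Y → ℝ)
    (hp : p = softmax f)
    (hpf : pf = softmax (f - η • fun y => p y - q y))
    (hpr : pr = softmax (f - η • fun y => p y * (Real.log (p y / q y) - KL p q)))
    (x1 x2 : Y)
    (hpp : p x1 = p x2) (hq12 : q x2 < q x1) (hpq : q x1 ≤ p x1) :
    Real.log (pf x1 / p x1) - Real.log (pf x2 / p x2) <
      Real.log (pr x1 / p x1) - Real.log (pr x2 / p x2) := by
  have : Nonempty Y := Fintype.card_pos_iff.mp (by omega)
  have hp_pos : ∀ y, 0 < p y := by intro y; rw [hp]; exact softmax_pos f y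
  have hpf_pos : ∀ y, 0 < pf y := by intro y; rw [hpf]; exact softmax_pos _ y
  have hpr_pos : ∀ y, 0 < pr y := by intro y; rw [hpr]; exact softmax_pos _ y
  -- rewrite each log-ratio
  have key : ∀ (g : Y → ℝ),
      Real.log (softmax g x1 / p x1) - Real.log (softmax g x2 / p x2)
        = (g x1 - f x1) - (g x2 - f x2) := by
    intro g
    rw [Real.log_div (ne_of_gt (softmax_pos g x1)) (ne_of_gt (hp_pos x1)),
        Real.log_div (ne_of_gt (softmax_pos g x2)) (ne_of_gt (hp_pos x2)),
        log_softmax, log_softmax, hp, log_softmax, log_softmax]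
    ring
  rw [hpf, hpr, key, key]
  simp only [Pi.sub_apply, Pi.smul_apply, smul_eq_mul]
  have hΔf : (f x1 - η * (p x1 - q x1) - f x1) - (f x2 - η * (p x2 - q x2) - f x2)
      = η * (q x1 - q x2) := by rw [hpp]; ring
  have hΔr : (f x1 - η * (p x1 * (Real.log (p x1 / q x1) - KL p q)) - f x1)
      - (f x2 - η * (p x2 * (Real.log (p x2 / q x2) - KL p q)) - f x2)
      = η * (p x1 * (Real.log (q x1) - Real.log (q x2))) := by
    rw [hpp, Real.log_div (ne_of_gt (hp_pos x2)) (ne_of_gt (hq_pos x1)),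
        Real.log_div (ne_of_gt (hp_pos x2)) (ne_of_gt (hq_pos x2))]
    ring
  rw [hΔf, hΔr]
  have hq1 : 0 < q x1 := hq_pos x1
  have hq2 : 0 < q x2 := hq_pos x2
  have hlogpos : 0 < Real.log (q x1) - Real.log (q x2) := by
    have := Real.log_lt_log hq2 hq12
    linarith
  -- q x1 * (log q1 - log q2) > q x1 - q x2
  have hstep : q x1 - q x2 < q x1 * (Real.log (q x1) - Real.log (q x2)) := by
    have h := Real.log_lt_sub_one_of_pos (div_pos hq2 hq1) (by
      intro h
      have : q x2 = q x1 := by field_simp at h; linarith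
      linarith)
    rw [Real.log_div (ne_of_gt hq2) (ne_of_gt hq1)] at h
    have h2 : q x1 * (Real.log (q x2) - Real.log (q x1)) < q x1 * (q x2 / q x1 - 1) :=
      (mul_lt_mul_iff_right₀ hq1).mpr h
    have h3 : q x1 * (q x2 / q x1 - 1) = q x2 - q x1 := by field_simp
    nlinarith
  have hmono : q x1 * (Real.log (q x1) - Real.log (q x2))
      ≤ p x1 * (Real.log (q x1) - Real.log (q x2)) :=
    mul_le_mul_of_nonneg_right hpq (le_of_lt hlogpos)
  have : q x1 - q x2 < p x1 * (Real.log (q x1) - Real.log (q x2)) := lt_of_lt_of_le hstep hmono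
  nlinarith
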